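/- Let φ be a quantifier-free dependence logic formula of disjunction-width at most 1 over a relational signature σ, with free variables x̄ = (x₁,…,x_n). Then there exists a first-order sentence χ over the signature σ∪{R}, where R is a fresh n-ary relation symbol, such that for every σ-structure 𝔄 and every team X with domain {x₁,…,x_n}: 𝔄⊨_X φ if and only if (𝔄, X(x̄)) ⊨ χ, where X(x̄)={s(x̄) : s∈X} interprets R. -/

import Mathlib

/- Statement 12.  Let φ be a quantifier-free dependence logic formula of
disjunction-width at most 1 over a relational signature σ, with free
variables x̄ = (x₁,…,x_n).  Then there is a first-order sentence χ over
σ ∪ {R} (R a fresh n-ary relation symbol) such that for every σ-structure 𝔄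
and team X with domain {x₁,…,x_n}:  𝔄 ⊨_X φ  iff  (𝔄, X(x̄)) ⊨ χ. -/

open FirstOrder

/-- The signature `σ ∪ {R}` obtained from `L` by adding a fresh `n`-ary
relation symbol `R`. -/
def addRel (L : FirstOrder.Language) (n : ℕ) : FirstOrder.Language where
  Functions := L.Functions
  Relations := fun k => L.Relations k ⊕ PLift (k = n)

/-- The expansion `(𝔄, R)` of an `L`-structure `𝔄` to an
`addRel L n`-structure interpreting the fresh symbol by the `n`-ary relation
`R`. -/
def expandStructure (L : FirstOrder.Language) (n : ℕ) (A : Type*)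
    [L.Structure A] (R : (Fin n → A) → Prop) : (addRel L n).Structure A where
  funMap := fun f v => Language.Structure.funMap (L := L) f v
  RelMap := fun r v =>
    match r with
    | Sum.inl r => Language.Structure.RelMap (L := L) r v
    | Sum.inr h => R (fun j => v (Fin.cast h.down.symm j))

/-- Formulas of dependence logic (negation normal form) over the relational
signature `L`, with variables from `V`. -/
inductive DepFormula (L : FirstOrder.Language) (V : Type*) : Type _ where
  | rel {k : ℕ} (R : L.Relations k) (ts : Fin k → V)
  | nrel {k : ℕ} (R : L.Relations k) (ts : Fin k → V)
  | eq (x y : V)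
  | neq (x y : V)
  | dep (xs : List V) (y : V)
  | and (φ ψ : DepFormula L V)
  | or (φ ψ : DepFormula L V)
  | ex (x : V) (φ : DepFormula L V)
  | all (x : V) (φ : DepFormula L V)

/-- A formula is quantifier-free if it contains no quantifiers. -/
def DepFormula.qfree {L : FirstOrder.Language} {V : Type*} :
    DepFormula L V → Prop
  | .and φ ψ => φ.qfree ∧ ψ.qfree
  | .or φ ψ => φ.qfree ∧ ψ.qfree
  | .ex _ _ => False
  | .all _ _ => False
  | _ => True

/-- The disjunction-width `Ω∨`: 1 for dependence atoms, 0 for first-order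
literals, max under `∧`, sum under `∨`, preserved by quantifiers. -/
def DepFormula.width {L : FirstOrder.Language} {V : Type*} :
    DepFormula L V → ℕ
  | .dep _ _ => 1
  | .and φ ψ => max φ.width ψ.width
  | .or φ ψ => φ.width + ψ.width
  | .ex _ φ => φ.width
  | .all _ φ => φ.width
  | _ => 0

/-- Lax team semantics `𝔄 ⊨_X φ` for dependence logic. -/
def TeamSat {L : FirstOrder.Language} {V : Type*} [DecidableEq V]
    (A : Type*) [L.Structure A] : DepFormula L V → Set (V → A) → Prop
  | .rel R ts, X => ∀ s ∈ X, Language.Structure.RelMap R (fun i => s (ts i))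
  | .nrel R ts, X => ∀ s ∈ X, ¬ Language.Structure.RelMap R (fun i => s (ts i))
  | .eq x y, X => ∀ s ∈ X, s x = s y
  | .neq x y, X => ∀ s ∈ X, s x ≠ s y
  | .dep xs y, X => ∀ s ∈ X, ∀ s' ∈ X, xs.map s = xs.map s' → s y = s' y
  | .and φ ψ, X => TeamSat A φ X ∧ TeamSat A ψ X
  | .or φ ψ, X => ∃ Y Z : Set (V → A), Y ∪ Z = X ∧ TeamSat A φ Y ∧ TeamSat A ψ Z
  | .ex x φ, X => ∃ F : (V → A) → Set A, (∀ s ∈ X, (F s).Nonempty) ∧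
      TeamSat A φ {t | ∃ s ∈ X, ∃ a ∈ F s, t = Function.update s x a}
  | .all x φ, X => TeamSat A φ {t | ∃ s ∈ X, ∃ a : A, t = Function.update s x a}

/-! A quantifier-free formula without dependence atoms is flat: it holds on a team iff its
first-order reading holds at every assignment. In a formula of width at most one, every
disjunction `φ ∨ ψ` has a flat disjunct `ψ`, and by downward closure `φ ∨ ψ` holds on `Y`
iff `φ` holds on `{s ∈ Y | s ⊭ ψ}`. Pushing these first-order guards down to the leaves, every
leaf is evaluated on a subteam `{s ∈ X | s ⊨ γ}` with `γ` first-order, and on such a subteam both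
flat formulas and dependence atoms are expressed by first-order sentences quantifying over `R`. -/

namespace FirstOrder.Language.Formula

variable {L : Language} {β : Type*} [Finite β]

noncomputable def univClosure (φ : L.Formula β) : L.Sentence :=
  iAlls β (φ.relabel Sum.inr)

@[simp]
theorem realize_univClosure {M : Type*} [L.Structure M] (φ : L.Formula β) :
    M ⊨ φ.univClosure ↔ ∀ v : β → M, φ.Realize v := by
  simp [univClosure, Sentence.Realize, Function.comp_def]

def eqOn {α : Type*} : List α → L.Formula (α ⊕ α)
  | [] => ⊤
  | x :: xs => Term.equal (var (Sum.inl x)) (var (Sum.inr x)) ⊓ eqOn xs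

@[simp]
theorem realize_eqOn {α M : Type*} [L.Structure M] (xs : List α) (v w : α → M) :
    (eqOn (L := L) xs).Realize (Sum.elim v w) ↔ xs.map v = xs.map w := by
  induction xs with
  | nil => simp [eqOn]
  | cons x xs ih => simp [eqOn, ih]

end FirstOrder.Language.Formula

namespace addRel

open Language

variable (L : Language) (n : ℕ)

def lhom : L →ᴸ addRel L n := ⟨fun _ f => f, fun _ r => Sum.inl r⟩

instance isExpansionOn_expandStructure (A : Type*) [L.Structure A] (R : (Fin n → A) → Prop) :
    @LHom.IsExpansionOn L (addRel L n) (lhom L n) A _ (expandStructure L n A R) :=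
  @LHom.IsExpansionOn.mk L (addRel L n) (lhom L n) A _ (expandStructure L n A R)
    (fun _ _ => rfl) (fun _ _ => rfl)

def relGuard (γ : L.Formula (Fin n)) : (addRel L n).Formula (Fin n) :=
  Relations.formula (Sum.inr ⟨rfl⟩ : (addRel L n).Relations n) (fun i => var i) ⊓
    (lhom L n).onFormula γ

noncomputable def allRel (γ δ : L.Formula (Fin n)) : (addRel L n).Sentence :=
  ((relGuard L n γ).imp ((lhom L n).onFormula δ)).univClosure

noncomputable def depRel (γ : L.Formula (Fin n)) (xs : List (Fin n)) (y : Fin n) :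
    (addRel L n).Sentence :=
  (((relGuard L n γ).relabel Sum.inl ⊓ (relGuard L n γ).relabel Sum.inr ⊓ Formula.eqOn xs).imp
    (Term.equal (var (Sum.inl y)) (var (Sum.inr y)))).univClosure

variable {L n} {A : Type*} [L.Structure A] (X : Set (Fin n → A)) (γ : L.Formula (Fin n))

theorem realize_relGuard (v : Fin n → A) :
    @Formula.Realize (addRel L n) A (expandStructure L n A (· ∈ X)) _ (relGuard L n γ) v ↔
      v ∈ {s ∈ X | γ.Realize s} := by
  let := expandStructure L n A (· ∈ X)
  rw [relGuard, Formula.realize_inf, LHom.realize_onFormula]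
  exact Iff.rfl

theorem realize_allRel (δ : L.Formula (Fin n)) :
    @Sentence.Realize (addRel L n) A (expandStructure L n A (· ∈ X)) (allRel L n γ δ) ↔
      ∀ v ∈ {s ∈ X | γ.Realize s}, δ.Realize v := by
  let := expandStructure L n A (· ∈ X)
  simp only [allRel, Formula.realize_univClosure, Formula.realize_imp, realize_relGuard,
    LHom.realize_onFormula]

theorem realize_depRel (xs : List (Fin n)) (y : Fin n) :
    @Sentence.Realize (addRel L n) A (expandStructure L n A (· ∈ X)) (depRel L n γ xs y) ↔
      ∀ v ∈ {s ∈ X | γ.Realize s}, ∀ w ∈ {s ∈ X | γ.Realize s},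
        xs.map v = xs.map w → v y = w y := by
  let := expandStructure L n A (· ∈ X)
  simp only [depRel, Formula.realize_univClosure]
  constructor
  · intro h v hv w hw hvw
    simpa [Formula.realize_imp, Formula.realize_inf, Formula.realize_relabel, realize_relGuard,
      Function.comp_def, hv, hw, hvw] using h (Sum.elim v w)
  · intro h vw
    rw [← Sum.elim_comp_inl_inr vw]
    simp only [Formula.realize_imp, Formula.realize_inf, Formula.realize_relabel, realize_relGuard,
      Formula.realize_eqOn, Formula.realize_equal, Term.realize_var, Sum.elim_inl, Sum.elim_inr,
      Sum.elim_comp_inl, Sum.elim_comp_inr]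
    rintro ⟨⟨hv, hw⟩, hvw⟩
    exact h _ hv _ hw hvw

end addRel

namespace DepFormula

open Language

variable {L : Language} {V : Type*}

def toFormula : DepFormula L V → L.Formula V
  | .rel R ts => R.formula fun i => var (ts i)
  | .nrel R ts => (R.formula fun i => var (ts i)).not
  | .eq x y => Term.equal (var x) (var y)
  | .neq x y => (Term.equal (var x) (var y)).not
  | .and φ ψ => φ.toFormula ⊓ ψ.toFormula
  | .or φ ψ => φ.toFormula ⊔ ψ.toFormula
  | _ => ⊥

variable [DecidableEq V] {A : Type*} [L.Structure A]

theorem teamSat_of_subset (φ : DepFormula L V) {Y Z : Set (V → A)} (hZY : Z ⊆ Y)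
    (h : TeamSat A φ Y) : TeamSat A φ Z := by
  induction φ generalizing Y Z with
  | rel | nrel | eq | neq => exact fun s hs => h s (hZY hs)
  | dep xs y => exact fun s hs s' hs' => h s (hZY hs) s' (hZY hs')
  | and φ ψ ihφ ihψ => exact ⟨ihφ hZY h.1, ihψ hZY h.2⟩
  | or φ ψ ihφ ihψ =>
    obtain ⟨Y₁, Y₂, rfl, h₁, h₂⟩ := h
    refine ⟨Y₁ ∩ Z, Y₂ ∩ Z, ?_, ihφ Set.inter_subset_left h₁, ihψ Set.inter_subset_left h₂⟩
    rw [← Set.union_inter_distrib_right, Set.inter_eq_right.mpr hZY]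
  | ex x φ ih =>
    obtain ⟨F, hF, h⟩ := h
    refine ⟨F, fun s hs => hF s (hZY hs), ih ?_ h⟩
    rintro t ⟨s, hs, ht⟩
    exact ⟨s, hZY hs, ht⟩
  | all x φ ih =>
    refine ih ?_ h
    rintro t ⟨s, hs, ht⟩
    exact ⟨s, hZY hs, ht⟩

theorem teamSat_or_comm (φ ψ : DepFormula L V) (Y : Set (V → A)) :
    TeamSat A (.or φ ψ) Y ↔ TeamSat A (.or ψ φ) Y := by
  constructor <;> rintro ⟨Y₁, Y₂, rfl, h₁, h₂⟩ <;> exact ⟨Y₂, Y₁, Set.union_comm _ _, h₂, h₁⟩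

theorem teamSat_iff_forall_realize_toFormula {φ : DepFormula L V} (hq : φ.qfree)
    (hw : φ.width = 0) (Y : Set (V → A)) :
    TeamSat A φ Y ↔ ∀ s ∈ Y, φ.toFormula.Realize s := by
  induction φ generalizing Y with
  | rel | nrel | eq | neq => simp [TeamSat, toFormula, Formula.realize_rel, Formula.realize_equal]
  | dep => simp [width] at hw
  | and φ ψ ihφ ihψ =>
    rw [width, Nat.max_eq_zero_iff] at hw
    simp only [TeamSat, toFormula, Formula.realize_inf, ihφ hq.1 hw.1, ihψ hq.2 hw.2,
      forall_and]
  | or φ ψ ihφ ihψ =>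
    rw [width, Nat.add_eq_zero_iff] at hw
    simp only [TeamSat, toFormula, Formula.realize_sup, ihφ hq.1 hw.1, ihψ hq.2 hw.2]
    constructor
    · rintro ⟨Y₁, Y₂, rfl, h₁, h₂⟩ s (hs | hs)
      exacts [Or.inl (h₁ s hs), Or.inr (h₂ s hs)]
    · intro h
      refine ⟨{s ∈ Y | φ.toFormula.Realize s}, {s ∈ Y | ¬ φ.toFormula.Realize s},
        Set.inter_union_sdiff Y _, fun s hs => hs.2, fun s hs => (h s hs.1).resolve_left hs.2⟩
  | ex | all => exact hq.elim

theorem teamSat_or_iff_of_width_eq_zero (φ : DepFormula L V) {ψ : DepFormula L V}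
    (hq : ψ.qfree) (hw : ψ.width = 0) (Y : Set (V → A)) :
    TeamSat A (.or φ ψ) Y ↔ TeamSat A φ {s ∈ Y | ¬ ψ.toFormula.Realize s} := by
  simp only [TeamSat, teamSat_iff_forall_realize_toFormula hq hw]
  constructor
  · rintro ⟨Y₁, Y₂, rfl, h₁, h₂⟩
    refine teamSat_of_subset φ (fun s ⟨hs, hψ⟩ => ?_) h₁
    exact hs.resolve_right fun hs => hψ (h₂ s hs)
  · intro h
    exact ⟨_, {s ∈ Y | ψ.toFormula.Realize s}, Set.sdiff_union_inter Y _, h, fun s hs => hs.2⟩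

noncomputable def toGuardedSentence {n : ℕ} :
    DepFormula L (Fin n) → L.Formula (Fin n) → (addRel L n).Sentence
  | .dep xs y, γ => addRel.depRel L n γ xs y
  | .and φ ψ, γ => φ.toGuardedSentence γ ⊓ ψ.toGuardedSentence γ
  | .or φ ψ, γ =>
    if φ.width = 0 then ψ.toGuardedSentence (γ ⊓ φ.toFormula.not)
    else φ.toGuardedSentence (γ ⊓ ψ.toFormula.not)
  | φ, γ => addRel.allRel L n γ φ.toFormula

theorem teamSat_sep_iff_realize_toGuardedSentence {n : ℕ} (X : Set (Fin n → A))
    {φ : DepFormula L (Fin n)} (hq : φ.qfree) (hw : φ.width ≤ 1) (γ : L.Formula (Fin n)) :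
    TeamSat A φ {s ∈ X | γ.Realize s} ↔
      @Sentence.Realize (addRel L n) A (expandStructure L n A (· ∈ X))
        (φ.toGuardedSentence γ) := by
  let := expandStructure L n A (· ∈ X)
  have sep_sep_not (γ δ : L.Formula (Fin n)) :
      {s ∈ {s ∈ X | γ.Realize s} | ¬ δ.Realize s} = {s ∈ X | (γ ⊓ δ.not).Realize s} := by
    ext s
    simp [and_assoc]
  induction φ generalizing γ with
  | rel | nrel | eq | neq =>
    exact (teamSat_iff_forall_realize_toFormula hq rfl _).trans (addRel.realize_allRel X γ _).symm
  | dep xs y => exact (addRel.realize_depRel X γ xs y).symm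
  | and φ ψ ihφ ihψ =>
    rw [width, max_le_iff] at hw
    rw [toGuardedSentence, Sentence.realize_inf]
    exact and_congr (ihφ hq.1 hw.1 γ) (ihψ hq.2 hw.2 γ)
  | or φ ψ ihφ ihψ =>
    rw [width] at hw
    unfold toGuardedSentence
    split_ifs with hφ
    · rw [teamSat_or_comm, teamSat_or_iff_of_width_eq_zero ψ hq.1 hφ, sep_sep_not]
      exact ihψ hq.2 (by omega) _
    · rw [teamSat_or_iff_of_width_eq_zero φ hq.2 (by omega), sep_sep_not]
      exact ihφ hq.1 (by omega) _
  | ex | all => exact hq.elim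

end DepFormula

/-- A quantifier-free dependence logic formula `φ` with
`Ω∨(φ) ≤ 1` and free variables among `x₁, …, x_n` is, on teams `X` with
domain `{x₁,…,x_n}`, equivalent to a first-order sentence `χ` over
`σ ∪ {R}`, where `R` is interpreted by the `n`-ary relation
`X(x̄) = {(s x₁, …, s x_n) : s ∈ X}` (an assignment with domain `{x₁,…,x_n}`
being identified with the `n`-tuple of its values). -/
theorem qfree_width_le_one_fo_definable (L : FirstOrder.Language) (n : ℕ)
    (φ : DepFormula L (Fin n)) (hq : φ.qfree) (hw : φ.width ≤ 1) :
    ∃ χ : (addRel L n).Sentence,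
      ∀ (A : Type) [L.Structure A] (X : Set (Fin n → A)), X.Finite →
        (TeamSat A φ X
          ↔ @FirstOrder.Language.Sentence.Realize (addRel L n) A
              (expandStructure L n A (fun v => v ∈ X)) χ) := by
  refine ⟨φ.toGuardedSentence ⊤, fun A _ X _ => ?_⟩
  simpa using DepFormula.teamSat_sep_iff_realize_toGuardedSentence X hq hw ⊤
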